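/- arXiv:1508.03351 — 5 statements merged into one kernel-verified Lean document; each statement's English description precedes it below -/
import Mathlib

section
/- Covariance Intersection consistency for the identity observation case: let a₁,…,a_p be random vectors in ℝⁿ with E[aᵢ] = α, true covariances R̃ᵢ := E[(aᵢ−α)(aᵢ−α)ᵀ], and arbitrary (possibly nonzero) cross-correlations R̃ᵢⱼ := E[(aᵢ−α)(aⱼ−α)ᵀ]. Suppose Rᵢ ⪰ R̃ᵢ ≻ 0 for all i. For weights ωᵢ > 0 with ∑ᵢ ωᵢ = 1, define R_c := (∑ᵢ ωᵢ Rᵢ⁻¹)⁻¹ and α̂_c := R_c ∑ᵢ ωᵢ Rᵢ⁻¹ aᵢ. Then α̂_c is unbiased and R_c ⪰ E[(α̂_c − α)(α̂_c − α)ᵀ]. -/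
/-!
Put `eᵢ = aᵢ - α`, `S = ∑ ωᵢ Rᵢ⁻¹` and `Z = ∑ ωᵢ Rᵢ⁻¹ eᵢ`. Since `R_c S = 1`, the estimate is
unbiased by linearity and `α̂_c - α = R_c Z`, so its second moment is `R_c E[Z Zᵀ] R_c`, and it
suffices to prove `E[Z Zᵀ] ⪯ S`. Testing against `x` and putting `yᵢ = Rᵢ⁻¹ x` gives
`xᵀ Z = ∑ ωᵢ yᵢᵀ eᵢ`; as the weights sum to one, convexity of the square yields
`E[(xᵀ Z)²] ≤ ∑ ωᵢ E[(yᵢᵀ eᵢ)²] = ∑ ωᵢ yᵢᵀ R̃ᵢ yᵢ ≤ ∑ ωᵢ yᵢᵀ Rᵢ yᵢ = xᵀ S x`,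
whatever the cross-correlations of the `eᵢ` are.
-/

open Matrix MeasureTheory

namespace CovarianceIntersection

variable {Ω : Type*} [MeasurableSpace Ω] {μ : Measure Ω} {ι k m : Type*}

noncomputable def secondMoment (μ : Measure Ω) (X : Ω → m → ℝ) : Matrix m m ℝ :=
  of fun c d => ∫ ω, X ω c * X ω d ∂μ

lemma isHermitian_secondMoment (X : Ω → m → ℝ) : (secondMoment μ X).IsHermitian := by
  ext c d
  simp [secondMoment, mul_comm]

variable [Fintype ι] [Fintype m]

lemma dotProduct_mul_dotProduct [Fintype k] (u x : m → ℝ) (v y : k → ℝ) :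
    (u ⬝ᵥ x) * (v ⬝ᵥ y) = ∑ c, ∑ d, u c * v d * (x c * y d) := by
  simp only [dotProduct, Finset.sum_mul_sum, mul_mul_mul_comm]

lemma integrable_dotProduct {X : Ω → m → ℝ} (hX : ∀ c, Integrable (fun ω => X ω c) μ)
    (u : m → ℝ) : Integrable (fun ω => u ⬝ᵥ X ω) μ :=
  integrable_finsetSum _ fun c _ => (hX c).const_mul (u c)

lemma integral_dotProduct {X : Ω → m → ℝ} (hX : ∀ c, Integrable (fun ω => X ω c) μ)
    (u : m → ℝ) : ∫ ω, u ⬝ᵥ X ω ∂μ = u ⬝ᵥ fun c => ∫ ω, X ω c ∂μ := by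
  simp only [dotProduct]
  rw [integral_finsetSum _ fun c _ => (hX c).const_mul (u c)]
  simp only [integral_const_mul]

lemma integrable_dotProduct_mul_dotProduct [Fintype k] {X : Ω → m → ℝ} {Y : Ω → k → ℝ}
    (hXY : ∀ c d, Integrable (fun ω => X ω c * Y ω d) μ) (u : m → ℝ) (v : k → ℝ) :
    Integrable (fun ω => (u ⬝ᵥ X ω) * (v ⬝ᵥ Y ω)) μ := by
  simp only [dotProduct_mul_dotProduct]
  exact integrable_finsetSum _ fun c _ => integrable_finsetSum _ fun d _ =>
    (hXY c d).const_mul (u c * v d)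

lemma dotProduct_secondMoment_mulVec {X : Ω → m → ℝ}
    (hX : ∀ c d, Integrable (fun ω => X ω c * X ω d) μ) (u v : m → ℝ) :
    u ⬝ᵥ (secondMoment μ X *ᵥ v) = ∫ ω, (u ⬝ᵥ X ω) * (v ⬝ᵥ X ω) ∂μ := by
  simp only [dotProduct_mul_dotProduct]
  rw [integral_finsetSum _ fun c _ => integrable_finsetSum _ fun d _ =>
    (hX c d).const_mul (u c * v d)]
  simp only [integral_finsetSum _ fun d _ => (hX _ d).const_mul _, integral_const_mul]
  simp only [dotProduct, mulVec, secondMoment, of_apply, Finset.mul_sum]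
  exact Finset.sum_congr rfl fun c _ => Finset.sum_congr rfl fun d _ => by ring

lemma secondMoment_mulVec {X : Ω → m → ℝ}
    (hX : ∀ c d, Integrable (fun ω => X ω c * X ω d) μ) (M : Matrix k m ℝ) :
    secondMoment μ (fun ω => M *ᵥ X ω) = M * secondMoment μ X * Mᵀ := by
  ext c d
  have h : (M * secondMoment μ X * Mᵀ) c d = M c ⬝ᵥ (secondMoment μ X *ᵥ M d) := by
    simp only [mul_apply, dotProduct, mulVec, transpose_apply, Finset.mul_sum, Finset.sum_mul]
    rw [Finset.sum_comm]
    exact Finset.sum_congr rfl fun _ _ => Finset.sum_congr rfl fun _ _ => by ring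
  rw [h, dotProduct_secondMoment_mulVec hX]
  rfl

lemma integrable_sum_mulVec_mul_sum_mulVec {e : ι → Ω → m → ℝ}
    (he : ∀ i j c d, Integrable (fun ω => e i ω c * e j ω d) μ) (M : ι → Matrix k m ℝ)
    (c d : k) :
    Integrable (fun ω => (∑ i, M i *ᵥ e i ω) c * (∑ i, M i *ᵥ e i ω) d) μ := by
  simp only [Finset.sum_apply, Finset.sum_mul_sum]
  exact integrable_finsetSum _ fun i _ => integrable_finsetSum _ fun j _ =>
    integrable_dotProduct_mul_dotProduct (he i j) (M i c) (M j d)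

lemma integral_sum_mulVec_apply {X : ι → Ω → m → ℝ}
    (hX : ∀ i c, Integrable (fun ω => X i ω c) μ) (M : ι → Matrix k m ℝ) (c : k) :
    ∫ ω, (∑ i, M i *ᵥ X i ω) c ∂μ = (∑ i, M i *ᵥ fun d => ∫ ω, X i ω d ∂μ) c := by
  simp only [Finset.sum_apply]
  exact (integral_finsetSum _ fun i _ => integrable_dotProduct (hX i) (M i c)).trans
    (Finset.sum_congr rfl fun i _ => integral_dotProduct (hX i) (M i c))

lemma _root_.Matrix.IsHermitian.dotProduct_mulVec_comm {A : Matrix m m ℝ} (hA : A.IsHermitian)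
    (u v : m → ℝ) : u ⬝ᵥ (A *ᵥ v) = (A *ᵥ u) ⬝ᵥ v := by
  rw [dotProduct_mulVec, ← mulVec_transpose, ← conjTranspose_eq_transpose_of_trivial, hA.eq]

theorem posSemidef_sum_smul_inv_sub_secondMoment [DecidableEq m] {e : ι → Ω → m → ℝ}
    {R : ι → Matrix m m ℝ} {w : ι → ℝ}
    (he : ∀ i j c d, Integrable (fun ω => e i ω c * e j ω d) μ) (hR : ∀ i, (R i).PosDef)
    (hRe : ∀ i, (R i - secondMoment μ (e i)).PosSemidef) (hw : ∀ i, 0 ≤ w i)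
    (hw1 : ∑ i, w i = 1) :
    (∑ i, w i • (R i)⁻¹ - secondMoment μ fun ω => ∑ i, (w i • (R i)⁻¹) *ᵥ e i ω).PosSemidef := by
  set Z := fun ω => ∑ i, (w i • (R i)⁻¹) *ᵥ e i ω
  have hZ := integrable_sum_mulVec_mul_sum_mulVec he fun i => w i • (R i)⁻¹
  have hS : (∑ i, w i • (R i)⁻¹).PosSemidef :=
    posSemidef_sum _ fun i _ => (hR i).inv.posSemidef.smul (hw i)
  refine .of_dotProduct_mulVec_nonneg (hS.isHermitian.sub (isHermitian_secondMoment Z))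
    fun x => ?_
  rw [star_trivial, sub_mulVec, dotProduct_sub, sub_nonneg, dotProduct_secondMoment_mulVec hZ]
  set y := fun i => (R i)⁻¹ *ᵥ x
  have hxZ : ∀ ω, x ⬝ᵥ Z ω = ∑ i, w i * (y i ⬝ᵥ e i ω) := fun ω => by
    simp only [Z, y, dotProduct_sum, smul_mulVec, dotProduct_smul, smul_eq_mul]
    exact Finset.sum_congr rfl fun i _ => by
      rw [IsHermitian.dotProduct_mulVec_comm (hR i).inv.isHermitian]
  have hy : ∀ i, y i ⬝ᵥ (R i *ᵥ y i) = x ⬝ᵥ ((R i)⁻¹ *ᵥ x) := fun i => by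
    rw [mulVec_mulVec, mul_nonsing_inv _ ((isUnit_iff_isUnit_det _).mp (hR i).isUnit),
      one_mulVec, dotProduct_comm]
  have hjensen : ∀ ω, (x ⬝ᵥ Z ω) * (x ⬝ᵥ Z ω) ≤ ∑ i, w i * ((y i ⬝ᵥ e i ω) * (y i ⬝ᵥ e i ω)) :=
    fun ω => by
      simpa only [hxZ, smul_eq_mul, sq] using
        even_two.convexOn_pow.map_sum_le (fun i _ => hw i) hw1 (fun i _ => Set.mem_univ _)
  have hye : ∀ i, Integrable (fun ω => (y i ⬝ᵥ e i ω) * (y i ⬝ᵥ e i ω)) μ := fun i =>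
    integrable_dotProduct_mul_dotProduct (he i i) (y i) (y i)
  calc ∫ ω, (x ⬝ᵥ Z ω) * (x ⬝ᵥ Z ω) ∂μ
      ≤ ∫ ω, ∑ i, w i * ((y i ⬝ᵥ e i ω) * (y i ⬝ᵥ e i ω)) ∂μ :=
        integral_mono (integrable_dotProduct_mul_dotProduct hZ x x)
          (integrable_finsetSum _ fun i _ => (hye i).const_mul (w i)) hjensen
    _ = ∑ i, w i * (y i ⬝ᵥ (secondMoment μ (e i) *ᵥ y i)) := by
        rw [integral_finsetSum _ fun i _ => (hye i).const_mul (w i)]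
        simp only [integral_const_mul, dotProduct_secondMoment_mulVec (he _ _)]
    _ ≤ ∑ i, w i * (y i ⬝ᵥ (R i *ᵥ y i)) := by
        gcongr with i
        · exact hw i
        · simpa [sub_mulVec] using (hRe i).dotProduct_mulVec_nonneg (y i)
    _ = x ⬝ᵥ ((∑ i, w i • (R i)⁻¹) *ᵥ x) := by
        simp only [hy, sum_mulVec, dotProduct_sum, smul_mulVec, dotProduct_smul, smul_eq_mul]

end CovarianceIntersection

open CovarianceIntersection in
theorem stmt_3_general {n p : ℕ} {Ω : Type*} [MeasureSpace Ω]
    (a : Fin p → Ω → Fin n → ℝ) (α : Fin n → ℝ)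
    (hint : ∀ i c, Integrable (fun ω => a i ω c))
    (hint2 : ∀ i j c d, Integrable (fun ω => (a i ω c - α c) * (a j ω d - α d)))
    (hmean : ∀ i c, (∫ ω, a i ω c) = α c)
    (Rt R : Fin p → Matrix (Fin n) (Fin n) ℝ)
    (hRt : ∀ i, Rt i = Matrix.of fun c d => ∫ ω, (a i ω c - α c) * (a i ω d - α d))
    (hRtpd : ∀ i, (Rt i).PosDef)
    (hcons : ∀ i, (R i - Rt i).PosSemidef)
    (w : Fin p → ℝ) (hw : ∀ i, 0 < w i) (hw1 : ∑ i, w i = 1)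
    (Rc : Matrix (Fin n) (Fin n) ℝ) (hRc : Rc = (∑ i, w i • (R i)⁻¹)⁻¹)
    (ahat : Ω → Fin n → ℝ)
    (hahat : ∀ ω, ahat ω = Rc *ᵥ (∑ i, w i • ((R i)⁻¹ *ᵥ a i ω))) :
    (∀ c, (∫ ω, ahat ω c) = α c) ∧
    (Rc - Matrix.of fun c d => ∫ ω, (ahat ω c - α c) * (ahat ω d - α d)).PosSemidef := by
  set e : Fin p → Ω → Fin n → ℝ := fun i ω => a i ω - α
  have hR : ∀ i, (R i).PosDef := fun i => by
    simpa using (hRtpd i).add_posSemidef (hcons i)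
  have hS : (∑ i, w i • (R i)⁻¹).PosDef :=
    posDef_sum (Finset.nonempty_of_sum_ne_zero (hw1 ▸ one_ne_zero))
      fun i _ => (hR i).inv.smul (hw i)
  have hRcS : Rc * ∑ i, w i • (R i)⁻¹ = 1 :=
    hRc ▸ nonsing_inv_mul _ ((isUnit_iff_isUnit_det _).mp hS.isUnit)
  have hRcRc : Rc * (∑ i, w i • (R i)⁻¹) * Rcᴴ = Rc := by
    rw [hRcS, Matrix.one_mul, hRc, hS.inv.isHermitian.eq]
  have hahat_sum : ∀ ω, ahat ω = ∑ i, (Rc * (w i • (R i)⁻¹)) *ᵥ a i ω := fun ω => by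
    simp only [hahat, mulVec_sum, ← mulVec_mulVec, smul_mulVec]
  have hcentered : ∀ ω, ahat ω - α = Rc *ᵥ ∑ i, (w i • (R i)⁻¹) *ᵥ e i ω := fun ω => by
    simp only [e, mulVec_sub, Finset.sum_sub_distrib, ← sum_mulVec, mulVec_sum, mulVec_mulVec,
      hRcS, one_mulVec, hahat_sum]
  constructor
  · intro c
    simp_rw [hahat_sum]
    rw [integral_sum_mulVec_apply hint]
    simp only [hmean, ← sum_mulVec, ← Matrix.mul_sum, hRcS, one_mulVec]
  · change (Rc - secondMoment volume fun ω => ahat ω - α).PosSemidef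
    have hRe : ∀ i, (R i - secondMoment volume (e i)).PosSemidef := fun i =>
      (show Rt i = secondMoment volume (e i) from hRt i) ▸ hcons i
    have key := (posSemidef_sum_smul_inv_sub_secondMoment (e := e) hint2 hR hRe
      (fun i => (hw i).le) hw1).mul_mul_conjTranspose_same Rc
    rwa [Matrix.mul_sub, Matrix.sub_mul, hRcRc, conjTranspose_eq_transpose_of_trivial,
      ← secondMoment_mulVec (integrable_sum_mulVec_mul_sum_mulVec (e := e) hint2 _),
      ← funext hcentered] at key

theorem stmt_3 {n p : ℕ} {Ω : Type*} [MeasureSpace Ω]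
    [IsProbabilityMeasure (volume : Measure Ω)]
    (a : Fin p → Ω → Fin n → ℝ) (α : Fin n → ℝ)
    (hint : ∀ i c, Integrable (fun ω => a i ω c))
    (hint2 : ∀ i j c d, Integrable (fun ω => (a i ω c - α c) * (a j ω d - α d)))
    (hmean : ∀ i c, (∫ ω, a i ω c) = α c)
    (Rt R : Fin p → Matrix (Fin n) (Fin n) ℝ)
    (hRt : ∀ i, Rt i = Matrix.of fun c d => ∫ ω, (a i ω c - α c) * (a i ω d - α d))
    (hRtpd : ∀ i, (Rt i).PosDef)
    (hcons : ∀ i, (R i - Rt i).PosSemidef)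
    (w : Fin p → ℝ) (hw : ∀ i, 0 < w i) (hw1 : ∑ i, w i = 1)
    (Rc : Matrix (Fin n) (Fin n) ℝ) (hRc : Rc = (∑ i, w i • (R i)⁻¹)⁻¹)
    (ahat : Ω → Fin n → ℝ)
    (hahat : ∀ ω, ahat ω = Rc *ᵥ (∑ i, w i • ((R i)⁻¹ *ᵥ a i ω))) :
    (∀ c, (∫ ω, ahat ω c) = α c) ∧
    (Rc - Matrix.of fun c d => ∫ ω, (ahat ω c - α c) * (ahat ω d - α d)).PosSemidef :=
  stmt_3_general a α hint hint2 hmean Rt R hRt hRtpd hcons w hw hw1 Rc hRc ahat hahat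
end

section
/- The DHIF posterior covariance is never larger than the KLA posterior covariance under equal weights: let Pⱼ ≻ 0, σⱼ > 0 with ∑_{j∈J} σⱼ = 1, and Sⱼ := Hⱼᵀ Rⱼ⁻¹ Hⱼ ⪰ 0. Then (∑ⱼ σⱼ Pⱼ⁻¹ + ∑ⱼ Sⱼ)⁻¹ ⪯ (∑ⱼ σⱼ (Pⱼ⁻¹ + Sⱼ))⁻¹, since ∑ⱼ Sⱼ ⪰ ∑ⱼ σⱼ Sⱼ. -/
open Matrix

theorem Matrix.PosDef.posSemidef_inv_sub_inv {ι K : Type*} [Fintype ι] [DecidableEq ι]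
    [Field K] [PartialOrder K] [StarRing K] [StarOrderedRing K] {A B : Matrix ι ι K}
    (hA : A.PosDef) (hAB : (B - A).PosSemidef) :
    (A⁻¹ - B⁻¹).PosSemidef := by
  have hB : B.PosDef := by simpa using hA.add_posSemidef hAB
  have hAinv := hA.inv
  have := hA.isUnit.invertible
  have := hAinv.isUnit.invertible
  have := hB.isUnit.invertible
  -- Both sides are the Schur complements of `!![B, 1; 1, A⁻¹]`.
  have hblock : (fromBlocks B 1 1ᴴ A⁻¹).PosSemidef := by
    rw [PosDef.fromBlocks₂₂ _ _ hAinv, inv_inv_of_invertible]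
    simpa using hAB
  simpa using (PosDef.fromBlocks₁₁ _ _ hB).mp hblock

theorem stmt_7 {n q : ℕ} (m : Fin q → ℕ)
    (P : Fin q → Matrix (Fin n) (Fin n) ℝ)
    (hP : ∀ j, (P j).PosDef)
    (σ : Fin q → ℝ) (hσ : ∀ j, 0 < σ j) (hσ1 : ∑ j, σ j = 1)
    (H : ∀ j : Fin q, Matrix (Fin (m j)) (Fin n) ℝ)
    (R : ∀ j : Fin q, Matrix (Fin (m j)) (Fin (m j)) ℝ)
    (hR : ∀ j, (R j).PosDef)
    (S : Fin q → Matrix (Fin n) (Fin n) ℝ)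
    (hSdef : ∀ j, S j = (H j)ᵀ * (R j)⁻¹ * H j) :
    ((∑ j, σ j • ((P j)⁻¹ + S j))⁻¹
      - ((∑ j, σ j • (P j)⁻¹) + ∑ j, S j)⁻¹).PosSemidef := by
  have hS : ∀ j, (S j).PosSemidef := fun j => by
    simpa [hSdef j, conjTranspose_eq_transpose_of_trivial] using
      (hR j).inv.posSemidef.conjTranspose_mul_mul_same (H j)
  have hσ_le_one : ∀ j, σ j ≤ 1 := fun j =>
    hσ1 ▸ Finset.single_le_sum (fun i _ => (hσ i).le) (Finset.mem_univ j)
  have hKLA : (∑ j, σ j • ((P j)⁻¹ + S j)).PosDef :=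
    posDef_sum (Finset.nonempty_of_sum_ne_zero (hσ1 ▸ one_ne_zero))
      fun j _ => ((hP j).inv.add_posSemidef (hS j)).smul (hσ j)
  have hgap : (∑ j, σ j • (P j)⁻¹) + ∑ j, S j - ∑ j, σ j • ((P j)⁻¹ + S j)
      = ∑ j, (1 - σ j) • S j := by
    simp only [smul_add, Finset.sum_add_distrib, sub_smul, one_smul, Finset.sum_sub_distrib]
    abel
  apply hKLA.posSemidef_inv_sub_inv
  rw [hgap]
  exact posSemidef_sum _ fun j _ => (hS j).smul (sub_nonneg.mpr (hσ_le_one j))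
end

section
/- The conclusion of the previous lemma extends to inhomogeneous products: if D₁, D₂, … all belong to the family of stochastic matrices induced by D (same zero/positive pattern as D, row sums 1, positive entries bounded below by a common ω̲ > 0), then there exists k̄ such that for all k ≥ k̄, any product D_k D_{k−1} ⋯ D₁ of k such matrices has (product)_{(i,j)} > 0 for all i ∈ 𝒱 and j ∈ ℛ. -/
open Matrix

/-- Edge relation of the graph associated with a stochastic matrix `D`. -/
def edgeRel {N : ℕ} (D : Matrix (Fin N) (Fin N) ℝ) (i j : Fin N) : Prop :=
  0 < D j i

/-- Backward product `Ds k * Ds (k-1) * ⋯ * Ds 1` of an inhomogeneous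
sequence of matrices. -/
def backProd {N : ℕ} (Ds : ℕ → Matrix (Fin N) (Fin N) ℝ) : ℕ → Matrix (Fin N) (Fin N) ℝ
  | 0 => 1
  | k + 1 => Ds (k + 1) * backProd Ds k

/-!
A product of nonnegative matrices has a positive entry exactly where some intermediate index
links positive entries of the factors, so the positivity pattern of `D_k ⋯ D_1` depends only on
the patterns of the factors: it is the pattern of `D ^ k`. A walk of length `k` from `j` to `i`
in the graph of `D` makes `(D ^ k) i j` positive, and the positive diagonal lets the walk idle,
so the entry stays positive for all larger powers. Every `i` is reached by a walk from every
`j ∈ R` (inside `R`, then out to `B`), and finitely many entries give a uniform threshold.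
-/

open Filter

namespace Matrix

variable {m n o R : Type*} [Fintype n] [Semiring R] [PartialOrder R] [IsStrictOrderedRing R]

lemma mul_apply_pos_iff {A : Matrix m n R} {B : Matrix n o R}
    (hA : ∀ i j, 0 ≤ A i j) (hB : ∀ i j, 0 ≤ B i j) (i : m) (j : o) :
    0 < (A * B) i j ↔ ∃ l, 0 < A i l ∧ 0 < B l j := by
  rw [mul_apply, Finset.sum_pos_iff_of_nonneg fun l _ => mul_nonneg (hA i l) (hB l j)]
  simp only [Finset.mem_univ, true_and]
  refine exists_congr fun l => ⟨fun h => ?_, fun h => mul_pos h.1 h.2⟩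
  exact ⟨(hA i l).lt_of_ne (left_ne_zero_of_mul h.ne').symm,
    (hB l j).lt_of_ne (right_ne_zero_of_mul h.ne').symm⟩

variable [DecidableEq n] {A : Matrix n n R}

lemma pow_apply_pos_of_le (hA : ∀ i j, 0 ≤ A i j) (hdiag : ∀ i, 0 < A i i) {i j : n} {k l : ℕ}
    (hk : 0 < (A ^ k) i j) (hkl : k ≤ l) : 0 < (A ^ l) i j := by
  induction l, hkl using Nat.le_induction with
  | base => exact hk
  | succ l _ ih =>
    rw [pow_succ', mul_apply_pos_iff hA (pow_apply_nonneg hA l)]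
    exact ⟨i, hdiag i, ih⟩

lemma eventually_pow_apply_pos (hA : ∀ i j, 0 ≤ A i j) (hdiag : ∀ i, 0 < A i i) {i j : n}
    (h : ∃ k, 0 < (A ^ k) i j) : ∀ᶠ k in atTop, 0 < (A ^ k) i j := by
  obtain ⟨k, hk⟩ := h
  exact eventually_atTop.2 ⟨k, fun l hkl => pow_apply_pos_of_le hA hdiag hk hkl⟩

end Matrix

variable {N : ℕ}

lemma exists_pow_apply_pos_of_reflTransGen {D : Matrix (Fin N) (Fin N) ℝ}
    (hD : ∀ i j, 0 ≤ D i j) {i j : Fin N} (h : Relation.ReflTransGen (edgeRel D) j i) :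
    ∃ k, 0 < (D ^ k) i j := by
  induction h with
  | refl => exact ⟨0, by simp⟩
  | @tail a b _ hab ih =>
    obtain ⟨k, hk⟩ := ih
    refine ⟨k + 1, ?_⟩
    rw [pow_succ', mul_apply_pos_iff hD (pow_apply_nonneg hD k)]
    exact ⟨a, hab, hk⟩

lemma backProd_apply_nonneg {Ds : ℕ → Matrix (Fin N) (Fin N) ℝ} (hDs : ∀ t i j, 0 ≤ Ds t i j) :
    ∀ k i j, 0 ≤ backProd Ds k i j
  | 0, i, j => by simp only [backProd, one_apply]; split_ifs <;> norm_num
  | k + 1, i, j => by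
    rw [backProd, mul_apply]
    exact Finset.sum_nonneg fun l _ => mul_nonneg (hDs _ i l) (backProd_apply_nonneg hDs k l j)

lemma backProd_apply_pos_iff {D : Matrix (Fin N) (Fin N) ℝ} {Ds : ℕ → Matrix (Fin N) (Fin N) ℝ}
    (hD : ∀ i j, 0 ≤ D i j) (hDs : ∀ t i j, 0 ≤ Ds t i j)
    (hpat : ∀ t i j, 0 < Ds t i j ↔ 0 < D i j) (k : ℕ) (i j : Fin N) :
    0 < backProd Ds k i j ↔ 0 < (D ^ k) i j := by
  induction k generalizing i with
  | zero => simp [backProd]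
  | succ k ih =>
    rw [backProd, pow_succ', mul_apply_pos_iff (hDs _) (backProd_apply_nonneg hDs k),
      mul_apply_pos_iff hD (pow_apply_nonneg hD k)]
    exact exists_congr fun l => and_congr (hpat _ i l) (ih l)

theorem stmt_9_general {N : ℕ} (D : Matrix (Fin N) (Fin N) ℝ)
    (R B : Finset (Fin N)) (ωlb : ℝ)
    (hpart : ∀ i, i ∈ R ∨ i ∈ B)
    (hnonneg : ∀ i j, 0 ≤ D i j)
    (hdiag : ∀ i, 0 < D i i)
    (hSC : ∀ i ∈ R, ∀ j ∈ R,
      Relation.ReflTransGen (fun a b => a ∈ R ∧ b ∈ R ∧ edgeRel D a b) i j)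
    (hreach : ∀ b ∈ B, ∃ r ∈ R, Relation.ReflTransGen (edgeRel D) r b) :
    ∃ kbar : ℕ, ∀ k ≥ kbar,
      ∀ Ds : ℕ → Matrix (Fin N) (Fin N) ℝ,
        (∀ t i j, 0 ≤ Ds t i j) →
        (∀ t i, ∑ j, Ds t i j = 1) →
        (∀ t i j, 0 < Ds t i j ↔ 0 < D i j) →
        (∀ t i j, 0 < D i j → ωlb ≤ Ds t i j) →
        ∀ i : Fin N, ∀ j ∈ R, 0 < backProd Ds k i j := by
  have hwalkR : ∀ j ∈ R, ∀ r ∈ R, Relation.ReflTransGen (edgeRel D) j r := fun j hj r hr =>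
    Relation.ReflTransGen.mono (fun _ _ h => h.2.2) _ _ (hSC j hj r hr)
  have hwalk : ∀ i, ∀ j ∈ R, Relation.ReflTransGen (edgeRel D) j i := by
    intro i j hj
    rcases hpart i with hi | hi
    · exact hwalkR j hj i hi
    · obtain ⟨r, hr, hri⟩ := hreach i hi
      exact (hwalkR j hj r hr).trans hri
  have hev : ∀ᶠ k in atTop, ∀ i, ∀ j ∈ R, 0 < (D ^ k) i j :=
    eventually_all.2 fun i => (eventually_all_finset R).2 fun j hj =>
      eventually_pow_apply_pos hnonneg hdiag
        (exists_pow_apply_pos_of_reflTransGen hnonneg (hwalk i j hj))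
  obtain ⟨kbar, hkbar⟩ := eventually_atTop.1 hev
  exact ⟨kbar, fun k hk Ds hDs _ hpat _ i j hj => (backProd_apply_pos_iff hnonneg hDs hpat k i j).2 (hkbar k hk i j hj)⟩

theorem stmt_9 {N : ℕ} (D : Matrix (Fin N) (Fin N) ℝ)
    (R B : Finset (Fin N)) (ωlb : ℝ) (hωlb : 0 < ωlb)
    (hpart : ∀ i, i ∈ R ∨ i ∈ B) (hdisj : Disjoint R B)
    (hnonneg : ∀ i j, 0 ≤ D i j)
    (hrow : ∀ i, ∑ j, D i j = 1)
    (hdiag : ∀ i, 0 < D i i)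
    (hSC : ∀ i ∈ R, ∀ j ∈ R,
      Relation.ReflTransGen (fun a b => a ∈ R ∧ b ∈ R ∧ edgeRel D a b) i j)
    (hreach : ∀ b ∈ B, ∃ r ∈ R, Relation.ReflTransGen (edgeRel D) r b)
    (hnoback : ∀ i ∈ R, ∀ j ∈ B, D i j = 0) :
    ∃ kbar : ℕ, ∀ k ≥ kbar,
      ∀ Ds : ℕ → Matrix (Fin N) (Fin N) ℝ,
        (∀ t i j, 0 ≤ Ds t i j) →
        (∀ t i, ∑ j, Ds t i j = 1) →
        (∀ t i j, 0 < Ds t i j ↔ 0 < D i j) →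
        (∀ t i j, 0 < D i j → ωlb ≤ Ds t i j) →
        ∀ i : Fin N, ∀ j ∈ R, 0 < backProd Ds k i j :=
  stmt_9_general D R B ωlb hpart hnonneg hdiag hSC hreach
end

section
/- Two-source CI consistency (scalar weights, two estimates): let e₁, e₂ be zero-mean random vectors with E[eᵢeᵢᵀ] ⪯ Rᵢ and Rᵢ ≻ 0, and let ω ∈ (0,1). Define P := (ω R₁⁻¹ + (1−ω) R₂⁻¹)⁻¹ and e := P(ω R₁⁻¹ e₁ + (1−ω) R₂⁻¹ e₂). Then E[e eᵀ] ⪯ P, regardless of the (unknown) cross-covariance E[e₁e₂ᵀ]. -/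
/-!
Fix a direction `x` and put `yᵢ = Rᵢ⁻¹ P x`. Then `xᵀe = w y₁ᵀe₁ + (1 - w) y₂ᵀe₂` and, since
`P⁻¹ = w R₁⁻¹ + (1 - w) R₂⁻¹`, also `xᵀPx = w y₁ᵀR₁y₁ + (1 - w) y₂ᵀR₂y₂`. Convexity of `t ↦ t²`
bounds `(xᵀe)²` pointwise by `w (y₁ᵀe₁)² + (1 - w) (y₂ᵀe₂)²`, in which the cross term `e₁ e₂ᵀ`
no longer occurs, and the expectation of the latter is at most `w y₁ᵀR₁y₁ + (1 - w) y₂ᵀR₂y₂`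
by the consistency of each source.
-/

open Matrix MeasureTheory

section QuadraticForm
variable {ι : Type*} [Fintype ι]

theorem posSemidef_sub_iff_dotProduct_mulVec_le {A B : Matrix ι ι ℝ} (hA : A.IsHermitian)
    (hB : B.IsHermitian) : (A - B).PosSemidef ↔ ∀ x, x ⬝ᵥ B *ᵥ x ≤ x ⬝ᵥ A *ᵥ x := by
  simp only [posSemidef_iff_dotProduct_mulVec, hA.sub hB, true_and, star_trivial, sub_mulVec,
    dotProduct_sub, sub_nonneg]

theorem dotProduct_mulVec_mulVec_of_isHermitian {A B : Matrix ι ι ℝ} (hA : A.IsHermitian)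
    (hB : B.IsHermitian) (x y : ι → ℝ) : x ⬝ᵥ A *ᵥ B *ᵥ y = (B *ᵥ A *ᵥ x) ⬝ᵥ y := by
  rw [dotProduct_mulVec, dotProduct_mulVec, ← mulVec_transpose, ← mulVec_transpose,
    (isHermitian_iff_isSymm.mp hA).eq, (isHermitian_iff_isSymm.mp hB).eq]

theorem dotProduct_mulVec_smul_mulVec_add_smul_mulVec {P A B : Matrix ι ι ℝ}
    (hP : P.IsHermitian) (hA : A.IsHermitian) (hB : B.IsHermitian) (a b : ℝ) (x u v : ι → ℝ) :
    x ⬝ᵥ P *ᵥ (a • (A *ᵥ u) + b • (B *ᵥ v))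
      = a * ((A *ᵥ P *ᵥ x) ⬝ᵥ u) + b * ((B *ᵥ P *ᵥ x) ⬝ᵥ v) := by
  rw [mulVec_add, mulVec_smul, mulVec_smul, dotProduct_add, dotProduct_smul, dotProduct_smul,
    smul_eq_mul, smul_eq_mul, dotProduct_mulVec_mulVec_of_isHermitian hP hA,
    dotProduct_mulVec_mulVec_of_isHermitian hP hB]

theorem dotProduct_mulVec_eq_of_eq_inv_smul_add_smul [DecidableEq ι] {P R₁ R₂ : Matrix ι ι ℝ}
    (hR₁ : IsUnit R₁) (hR₂ : IsUnit R₂) {a b : ℝ} (hS : IsUnit (a • R₁⁻¹ + b • R₂⁻¹))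
    (hP : P = (a • R₁⁻¹ + b • R₂⁻¹)⁻¹) (x : ι → ℝ) :
    x ⬝ᵥ P *ᵥ x = a * ((R₁⁻¹ *ᵥ P *ᵥ x) ⬝ᵥ R₁ *ᵥ R₁⁻¹ *ᵥ P *ᵥ x)
      + b * ((R₂⁻¹ *ᵥ P *ᵥ x) ⬝ᵥ R₂ *ᵥ R₂⁻¹ *ᵥ P *ᵥ x) := by
  rw [mulVec_mulVec _ R₁, mul_nonsing_inv _ ((isUnit_iff_isUnit_det _).mp hR₁), one_mulVec,
    mulVec_mulVec _ R₂, mul_nonsing_inv _ ((isUnit_iff_isUnit_det _).mp hR₂), one_mulVec,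
    ← smul_eq_mul a, ← smul_eq_mul b, ← smul_dotProduct, ← smul_dotProduct, ← add_dotProduct,
    ← smul_mulVec, ← smul_mulVec, ← add_mulVec, mulVec_mulVec, hP,
    mul_nonsing_inv _ ((isUnit_iff_isUnit_det _).mp hS), one_mulVec, dotProduct_comm]

end QuadraticForm

section SecondMoment
variable {ι κ Ω : Type*} [Fintype ι] [MeasurableSpace Ω] {μ : Measure Ω}

theorem integrable_dotProduct_mul_dotProduct {f g : Ω → ι → ℝ}
    (hfg : ∀ a b, Integrable (fun ω => f ω a * g ω b) μ) (x y : ι → ℝ) :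
    Integrable (fun ω => (x ⬝ᵥ f ω) * (y ⬝ᵥ g ω)) μ := by
  simp only [dotProduct, Finset.sum_mul_sum]
  refine integrable_finsetSum _ fun a _ => integrable_finsetSum _ fun b _ => ?_
  simpa only [mul_mul_mul_comm] using (hfg a b).const_mul (x a * y b)

theorem integrable_mul_apply_of_eq_mulVec_add_mulVec {e : Ω → κ → ℝ} {e₁ e₂ : Ω → ι → ℝ}
    {A B : Matrix κ ι ℝ} (he : ∀ ω, e ω = A *ᵥ e₁ ω + B *ᵥ e₂ ω)
    (h₁₁ : ∀ a b, Integrable (fun ω => e₁ ω a * e₁ ω b) μ)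
    (h₁₂ : ∀ a b, Integrable (fun ω => e₁ ω a * e₂ ω b) μ)
    (h₂₁ : ∀ a b, Integrable (fun ω => e₂ ω a * e₁ ω b) μ)
    (h₂₂ : ∀ a b, Integrable (fun ω => e₂ ω a * e₂ ω b) μ) (a b : κ) :
    Integrable (fun ω => e ω a * e ω b) μ := by
  simp only [he, Pi.add_apply, mulVec, add_mul, mul_add]
  exact ((integrable_dotProduct_mul_dotProduct h₁₁ _ _).add
    (integrable_dotProduct_mul_dotProduct h₂₁ _ _)).add
    ((integrable_dotProduct_mul_dotProduct h₁₂ _ _).add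
    (integrable_dotProduct_mul_dotProduct h₂₂ _ _))

omit [Fintype ι] in
theorem secondMoment_isHermitian (f : Ω → ι → ℝ) :
    (of fun a b => ∫ ω, f ω a * f ω b ∂μ).IsHermitian :=
  IsHermitian.ext fun a b => by simp only [of_apply, star_trivial, mul_comm]

theorem dotProduct_secondMoment_mulVec {f : Ω → ι → ℝ}
    (hf : ∀ a b, Integrable (fun ω => f ω a * f ω b) μ) (x : ι → ℝ) :
    x ⬝ᵥ (of fun a b => ∫ ω, f ω a * f ω b ∂μ) *ᵥ x = ∫ ω, (x ⬝ᵥ f ω) ^ 2 ∂μ := by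
  have hsq : ∀ ω, (x ⬝ᵥ f ω) ^ 2 = ∑ a, ∑ b, x a * x b * (f ω a * f ω b) := fun ω => by
    simp only [sq, dotProduct, Finset.sum_mul_sum, mul_mul_mul_comm]
  simp_rw [hsq]
  rw [integral_finsetSum _ fun a _ => integrable_finsetSum _ fun b _ => (hf a b).const_mul _]
  simp only [dotProduct, mulVec, of_apply, Finset.mul_sum]
  refine Finset.sum_congr rfl fun a _ => ?_
  rw [integral_finsetSum _ fun b _ => (hf a b).const_mul _]
  refine Finset.sum_congr rfl fun b _ => ?_
  rw [integral_const_mul]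
  ring

theorem integral_sq_dotProduct_le_of_posSemidef_sub {f : Ω → ι → ℝ} {R : Matrix ι ι ℝ}
    (hf : ∀ a b, Integrable (fun ω => f ω a * f ω b) μ)
    (hR : (R - of fun a b => ∫ ω, f ω a * f ω b ∂μ).PosSemidef) (y : ι → ℝ) :
    ∫ ω, (y ⬝ᵥ f ω) ^ 2 ∂μ ≤ y ⬝ᵥ R *ᵥ y := by
  simpa only [star_trivial, sub_mulVec, dotProduct_sub, sub_nonneg,
    dotProduct_secondMoment_mulVec hf] using hR.dotProduct_mulVec_nonneg y

theorem integral_sq_convexComb_le {e₁ e₂ : Ω → ι → ℝ} {R₁ R₂ : Matrix ι ι ℝ}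
    (h₁ : ∀ a b, Integrable (fun ω => e₁ ω a * e₁ ω b) μ)
    (h₂ : ∀ a b, Integrable (fun ω => e₂ ω a * e₂ ω b) μ)
    (hR₁ : (R₁ - of fun a b => ∫ ω, e₁ ω a * e₁ ω b ∂μ).PosSemidef)
    (hR₂ : (R₂ - of fun a b => ∫ ω, e₂ ω a * e₂ ω b ∂μ).PosSemidef)
    {w : ℝ} (hw₀ : 0 ≤ w) (hw₁ : w ≤ 1) (y₁ y₂ : ι → ℝ) :
    ∫ ω, (w * (y₁ ⬝ᵥ e₁ ω) + (1 - w) * (y₂ ⬝ᵥ e₂ ω)) ^ 2 ∂μ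
      ≤ w * (y₁ ⬝ᵥ R₁ *ᵥ y₁) + (1 - w) * (y₂ ⬝ᵥ R₂ *ᵥ y₂) := by
  have hw₁' : 0 ≤ 1 - w := sub_nonneg.mpr hw₁
  have hsq₁ : Integrable (fun ω => (y₁ ⬝ᵥ e₁ ω) ^ 2) μ := by
    simpa only [sq] using integrable_dotProduct_mul_dotProduct h₁ y₁ y₁
  have hsq₂ : Integrable (fun ω => (y₂ ⬝ᵥ e₂ ω) ^ 2) μ := by
    simpa only [sq] using integrable_dotProduct_mul_dotProduct h₂ y₂ y₂
  calc ∫ ω, (w * (y₁ ⬝ᵥ e₁ ω) + (1 - w) * (y₂ ⬝ᵥ e₂ ω)) ^ 2 ∂μ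
      ≤ ∫ ω, (w * (y₁ ⬝ᵥ e₁ ω) ^ 2 + (1 - w) * (y₂ ⬝ᵥ e₂ ω) ^ 2) ∂μ := by
        refine integral_mono_of_nonneg (.of_forall fun ω => sq_nonneg _)
          ((hsq₁.const_mul w).add (hsq₂.const_mul (1 - w))) (.of_forall fun ω => ?_)
        exact (even_two.convexOn_pow).2 trivial trivial hw₀ hw₁' (add_sub_cancel w 1)
    _ = w * ∫ ω, (y₁ ⬝ᵥ e₁ ω) ^ 2 ∂μ + (1 - w) * ∫ ω, (y₂ ⬝ᵥ e₂ ω) ^ 2 ∂μ := by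
        rw [integral_add (hsq₁.const_mul w) (hsq₂.const_mul (1 - w)), integral_const_mul,
          integral_const_mul]
    _ ≤ w * (y₁ ⬝ᵥ R₁ *ᵥ y₁) + (1 - w) * (y₂ ⬝ᵥ R₂ *ᵥ y₂) := by
        gcongr
        exacts [integral_sq_dotProduct_le_of_posSemidef_sub h₁ hR₁ y₁,
          integral_sq_dotProduct_le_of_posSemidef_sub h₂ hR₂ y₂]

end SecondMoment

theorem stmt_12_general {n : ℕ} {Ω : Type*} [MeasureSpace Ω]
    (e₁ e₂ : Ω → Fin n → ℝ)
    (hprod : ∀ (f g : Ω → Fin n → ℝ), (f = e₁ ∨ f = e₂) → (g = e₁ ∨ g = e₂) →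
      ∀ a b, Integrable (fun ω => f ω a * g ω b))
    (R₁ R₂ : Matrix (Fin n) (Fin n) ℝ)
    (hR₁ : R₁.PosDef) (hR₂ : R₂.PosDef)
    (hcons1 : (R₁ - Matrix.of fun a b => ∫ ω, e₁ ω a * e₁ ω b).PosSemidef)
    (hcons2 : (R₂ - Matrix.of fun a b => ∫ ω, e₂ ω a * e₂ ω b).PosSemidef)
    (w : ℝ) (hw : 0 < w) (hw1 : w < 1)
    (P : Matrix (Fin n) (Fin n) ℝ)
    (hP : P = (w • R₁⁻¹ + (1 - w) • R₂⁻¹)⁻¹)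
    (e : Ω → Fin n → ℝ)
    (he : ∀ ω, e ω = P *ᵥ (w • (R₁⁻¹ *ᵥ e₁ ω) + (1 - w) • (R₂⁻¹ *ᵥ e₂ ω))) :
    (P - Matrix.of fun a b => ∫ ω, e ω a * e ω b).PosSemidef := by
  have hS : (w • R₁⁻¹ + (1 - w) • R₂⁻¹).PosDef :=
    (hR₁.inv.smul hw).add (hR₂.inv.smul (sub_pos.mpr hw1))
  have hP_herm : P.IsHermitian := hP ▸ hS.inv.isHermitian
  have he_int := integrable_mul_apply_of_eq_mulVec_add_mulVec
    (e := e) (A := w • (P * R₁⁻¹)) (B := (1 - w) • (P * R₂⁻¹))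
    (fun ω => by rw [he, mulVec_add, mulVec_smul, mulVec_smul, smul_mulVec, smul_mulVec,
      mulVec_mulVec, mulVec_mulVec])
    (hprod _ _ (.inl rfl) (.inl rfl)) (hprod _ _ (.inl rfl) (.inr rfl))
    (hprod _ _ (.inr rfl) (.inl rfl)) (hprod _ _ (.inr rfl) (.inr rfl))
  rw [posSemidef_sub_iff_dotProduct_mulVec_le hP_herm (secondMoment_isHermitian e)]
  intro x
  rw [dotProduct_secondMoment_mulVec he_int, dotProduct_mulVec_eq_of_eq_inv_smul_add_smul
    hR₁.isUnit hR₂.isUnit hS.isUnit hP x]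
  simp_rw [he, dotProduct_mulVec_smul_mulVec_add_smul_mulVec hP_herm hR₁.inv.isHermitian
    hR₂.inv.isHermitian]
  exact integral_sq_convexComb_le (hprod _ _ (.inl rfl) (.inl rfl))
    (hprod _ _ (.inr rfl) (.inr rfl)) hcons1 hcons2 hw.le hw1.le _ _

theorem stmt_12 {n : ℕ} {Ω : Type*} [MeasureSpace Ω]
    [IsProbabilityMeasure (volume : Measure Ω)]
    (e₁ e₂ : Ω → Fin n → ℝ)
    (hint1 : ∀ a, Integrable (fun ω => e₁ ω a))
    (hint2 : ∀ a, Integrable (fun ω => e₂ ω a))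
    (hprod : ∀ (f g : Ω → Fin n → ℝ), (f = e₁ ∨ f = e₂) → (g = e₁ ∨ g = e₂) →
      ∀ a b, Integrable (fun ω => f ω a * g ω b))
    (hmean1 : ∀ a, (∫ ω, e₁ ω a) = 0) (hmean2 : ∀ a, (∫ ω, e₂ ω a) = 0)
    (R₁ R₂ : Matrix (Fin n) (Fin n) ℝ)
    (hR₁ : R₁.PosDef) (hR₂ : R₂.PosDef)
    (hcons1 : (R₁ - Matrix.of fun a b => ∫ ω, e₁ ω a * e₁ ω b).PosSemidef)
    (hcons2 : (R₂ - Matrix.of fun a b => ∫ ω, e₂ ω a * e₂ ω b).PosSemidef)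
    (w : ℝ) (hw : 0 < w) (hw1 : w < 1)
    (P : Matrix (Fin n) (Fin n) ℝ)
    (hP : P = (w • R₁⁻¹ + (1 - w) • R₂⁻¹)⁻¹)
    (e : Ω → Fin n → ℝ)
    (he : ∀ ω, e ω = P *ᵥ (w • (R₁⁻¹ *ᵥ e₁ ω) + (1 - w) • (R₂⁻¹ *ᵥ e₂ ω))) :
    (P - Matrix.of fun a b => ∫ ω, e ω a * e ω b).PosSemidef :=
  stmt_12_general e₁ e₂ hprod R₁ R₂ hR₁ hR₂ hcons1 hcons2 w hw hw1 P hP e he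
end

section
/- Boundedness of the approximated covariance: under the recursive inequality Pᵢ,ₖ⁻¹ ⪰ Γᵢ, where Γᵢ := ∑_{τ=2}^{k̄} β̌^{τ−1} ∑_{j∉𝔑} cᵢⱼ⁽τ⁾ F^{(1−τ)ᵀ} Hⱼᵀ Rⱼ⁻¹ Hⱼ F^{1−τ}, if the coefficients cᵢⱼ⁽τ⁾ are strictly positive for all τ ≥ τ̄, all j in a set ℛ whose collective observation matrices give (F, col{Hⱼ}_{j∈ℛ}) observable, and k̄ ≥ τ̄ + n, then Γᵢ ≻ 0, and hence Pᵢ,ₖ ⪯ Γᵢ⁻¹ for all k ≥ k̄: the approximated error covariance is uniformly bounded above. -/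
/-!
Γ is a nonnegative combination of the terms (Hⱼ F^{1-τ})ᵀ Rⱼ⁻¹ (Hⱼ F^{1-τ}), each positive
semidefinite. For x ≠ 0, observability applied to F^{-(τ̄+n-2)} x yields some τ ∈ [τ̄, τ̄+n-1] ⊆ [2, k̄]
and j ∈ ℛ with Hⱼ F^{1-τ} x ≠ 0; that term has a strictly positive weight, so xᵀ Γ x > 0.
The bound on P_k is the antitonicity of inversion in the Loewner order.
-/

open Matrix

namespace Matrix

theorem pow_mul_inv_pow_add {n K : Type*} [Fintype n] [DecidableEq n] [CommRing K]
    {F : Matrix n n K} (hF : IsUnit F.det) (s t : ℕ) : F ^ s * F⁻¹ ^ (s + t) = F⁻¹ ^ t := by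
  rw [pow_add, ← Matrix.mul_assoc, inv_pow', mul_nonsing_inv _ (by simpa using hF.pow s),
    Matrix.one_mul]

theorem exists_mem_Ico_mulVec_inv_pow_ne_zero {n K ι : Type*} [Fintype n] [DecidableEq n]
    [CommRing K] {m : ι → Type*} [∀ j, Fintype (m j)] {F : Matrix n n K} (hF : IsUnit F.det)
    {H : ∀ j, Matrix (m j) n K} {J : Finset ι} {d : ℕ}
    (hobs : ∀ x : n → K, (∀ τ < d, ∀ j ∈ J, H j *ᵥ (F ^ τ *ᵥ x) = 0) → x = 0)
    (b : ℕ) {x : n → K} (hx : x ≠ 0) :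
    ∃ t ∈ Finset.Ico b (b + d), ∃ j ∈ J, H j *ᵥ (F⁻¹ ^ t *ᵥ x) ≠ 0 := by
  have hy : F⁻¹ ^ (b + d - 1) *ᵥ x ≠ 0 := by
    intro hy
    have hcancel := pow_mul_inv_pow_add hF (b + d - 1) 0
    rw [add_zero, pow_zero] at hcancel
    rw [← one_mulVec x, ← hcancel, ← mulVec_mulVec, hy, mulVec_zero] at hx
    exact hx rfl
  by_contra! hzero
  refine hy (hobs _ fun τ hτ j hj => ?_)
  rw [mulVec_mulVec x (F ^ τ), show b + d - 1 = τ + (b + (d - 1 - τ)) by omega,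
    pow_mul_inv_pow_add hF]
  exact hzero _ (Finset.mem_Ico.mpr ⟨by omega, by omega⟩) j hj

theorem posSemidef_sum_smul {n ι : Type*} {s : Finset ι} {w : ι → ℝ} {A : ι → Matrix n n ℝ}
    (hw : ∀ i ∈ s, 0 ≤ w i) (hA : ∀ i ∈ s, (A i).PosSemidef) :
    (∑ i ∈ s, w i • A i).PosSemidef :=
  posSemidef_sum s fun i hi => (hA i hi).smul (hw i hi)

theorem dotProduct_sum_smul_mulVec_pos {n ι : Type*} [Fintype n] {s : Finset ι} {w : ι → ℝ}
    {A : ι → Matrix n n ℝ} (hw : ∀ i ∈ s, 0 ≤ w i) (hA : ∀ i ∈ s, (A i).PosSemidef)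
    {i : ι} (hi : i ∈ s) (hwi : 0 < w i) {x : n → ℝ} (hx : 0 < x ⬝ᵥ (A i *ᵥ x)) :
    0 < x ⬝ᵥ ((∑ i ∈ s, w i • A i) *ᵥ x) := by
  simp only [sum_mulVec, dotProduct_sum, smul_mulVec, dotProduct_smul, smul_eq_mul]
  refine Finset.sum_pos' (fun k hk => mul_nonneg (hw k hk) ?_) ⟨i, hi, mul_pos hwi hx⟩
  simpa using (hA k hk).dotProduct_mulVec_nonneg x

theorem PosDef.dotProduct_transpose_mul_mul_mulVec_pos {m n : Type*} [Fintype m] [Fintype n]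
    {S : Matrix m m ℝ} (hS : S.PosDef) {B : Matrix m n ℝ} {x : n → ℝ} (hx : B *ᵥ x ≠ 0) :
    0 < x ⬝ᵥ ((Bᵀ * S * B) *ᵥ x) := by
  simpa [← mulVec_mulVec, dotProduct_mulVec _ Bᵀ, vecMul_transpose] using
    hS.dotProduct_mulVec_pos hx

/- Both sides say that `fromBlocks A⁻¹ 1 1 B⁻¹` is positive semidefinite: they are its two
Schur complements. -/
theorem PosDef.posSemidef_inv_sub_iff {n K : Type*} [Fintype n] [DecidableEq n]
    [Field K] [PartialOrder K] [StarRing K] [StarOrderedRing K]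
    {A B : Matrix n n K} (hA : A.PosDef) (hB : B.PosDef) :
    (B⁻¹ - A).PosSemidef ↔ (A⁻¹ - B).PosSemidef := by
  let _ := hA.isUnit.invertible
  let _ := hB.isUnit.invertible
  let _ := hA.inv.isUnit.invertible
  let _ := hB.inv.isUnit.invertible
  have h₁₁ := PosDef.fromBlocks₁₁ (1 : Matrix n n K) B⁻¹ hA.inv
  have h₂₂ := PosDef.fromBlocks₂₂ A⁻¹ (1 : Matrix n n K) hB.inv
  simp only [conjTranspose_one, Matrix.one_mul, Matrix.mul_one, inv_inv_of_invertible]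
    at h₁₁ h₂₂
  rw [← h₁₁, h₂₂]

end Matrix

theorem stmt_16_general {n N : ℕ} (m : Fin N → ℕ)
    (F : Matrix (Fin n) (Fin n) ℝ) (hF : IsUnit F.det)
    (H : ∀ j : Fin N, Matrix (Fin (m j)) (Fin n) ℝ)
    (R : ∀ j : Fin N, Matrix (Fin (m j)) (Fin (m j)) ℝ)
    (naive : Finset (Fin N)) (Rset : Finset (Fin N))
    (hRnaive : ∀ j ∈ Rset, j ∉ naive)
    (hRpd : ∀ j ∉ naive, (R j).PosDef)
    (β : ℝ) (hβ0 : 0 < β)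
    (τbar kbar : ℕ) (hkbar : τbar + n ≤ kbar) (hτbar : 2 ≤ τbar)
    (c : ℕ → Fin N → ℝ)
    (hcnonneg : ∀ τ j, 0 ≤ c τ j)
    (hcpos : ∀ τ j, τbar ≤ τ → j ∈ Rset → 0 < c τ j)
    -- observability of (F, col{Hⱼ}_{j ∈ ℛ})
    (hobs : ∀ x : Fin n → ℝ,
      (∀ τ < n, ∀ j ∈ Rset, H j *ᵥ (F ^ τ *ᵥ x) = 0) → x = 0)
    (Γ : Matrix (Fin n) (Fin n) ℝ)
    (hΓ : Γ = ∑ τ ∈ Finset.Icc 2 kbar, β ^ (τ - 1) •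
        ∑ j ∈ naiveᶜ, c τ j •
          (((F⁻¹) ^ (τ - 1))ᵀ * ((H j)ᵀ * (R j)⁻¹ * H j) * (F⁻¹) ^ (τ - 1)))
    (P : ℕ → Matrix (Fin n) (Fin n) ℝ)
    (hPpd : ∀ k, (P k).PosDef)
    (hPbound : ∀ k ≥ kbar, ((P k)⁻¹ - Γ).PosSemidef) :
    Γ.PosDef ∧ ∀ k ≥ kbar, (Γ⁻¹ - P k).PosSemidef := by
  set G : ℕ → Fin N → Matrix (Fin n) (Fin n) ℝ :=
    fun τ j => (H j * F⁻¹ ^ (τ - 1))ᵀ * (R j)⁻¹ * (H j * F⁻¹ ^ (τ - 1))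
  replace hΓ : Γ = ∑ τ ∈ Finset.Icc 2 kbar, β ^ (τ - 1) • ∑ j ∈ naiveᶜ, c τ j • G τ j := by
    simp only [hΓ, G, transpose_mul, Matrix.mul_assoc]
  have hG : ∀ τ, ∀ j ∈ naiveᶜ, (G τ j).PosSemidef := fun τ j hj => by
    simpa [G, conjTranspose_eq_transpose_of_trivial] using
      (hRpd j (Finset.mem_compl.mp hj)).inv.posSemidef.conjTranspose_mul_mul_same
        (H j * F⁻¹ ^ (τ - 1))
  have hinner : ∀ τ ∈ Finset.Icc 2 kbar, (∑ j ∈ naiveᶜ, c τ j • G τ j).PosSemidef :=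
    fun τ _ => posSemidef_sum_smul (fun j _ => hcnonneg τ j) (hG τ)
  have hΓpd : Γ.PosDef := by
    rw [hΓ]
    refine PosDef.of_dotProduct_mulVec_pos
      (posSemidef_sum_smul (fun τ _ => by positivity) hinner).isHermitian fun x hx => ?_
    obtain ⟨t, ht, j, hjR, hne⟩ := exists_mem_Ico_mulVec_inv_pow_ne_zero hF hobs (τbar - 1) hx
    rw [Finset.mem_Ico] at ht
    rw [star_trivial]
    refine dotProduct_sum_smul_mulVec_pos (fun τ _ => by positivity) hinner (i := t + 1)
      (Finset.mem_Icc.mpr ⟨by omega, by omega⟩) (by positivity) ?_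
    refine dotProduct_sum_smul_mulVec_pos (fun j _ => hcnonneg _ j) (hG _)
      (Finset.mem_compl.mpr (hRnaive j hjR)) (hcpos _ j (by omega) hjR) ?_
    exact (hRpd j (hRnaive j hjR)).inv.dotProduct_transpose_mul_mul_mulVec_pos
      (by simpa [← mulVec_mulVec] using hne)
  exact ⟨hΓpd, fun k hk => (hΓpd.posSemidef_inv_sub_iff (hPpd k)).mp (hPbound k hk)⟩

theorem stmt_16 {n N : ℕ} (m : Fin N → ℕ)
    (F : Matrix (Fin n) (Fin n) ℝ) (hF : IsUnit F.det)
    (H : ∀ j : Fin N, Matrix (Fin (m j)) (Fin n) ℝ)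
    (R : ∀ j : Fin N, Matrix (Fin (m j)) (Fin (m j)) ℝ)
    (naive : Finset (Fin N)) (Rset : Finset (Fin N))
    (hRnaive : ∀ j ∈ Rset, j ∉ naive)
    (hRpd : ∀ j ∉ naive, (R j).PosDef)
    (β : ℝ) (hβ0 : 0 < β) (hβ1 : β ≤ 1)
    (τbar kbar : ℕ) (hkbar : τbar + n ≤ kbar) (hτbar : 2 ≤ τbar)
    (c : ℕ → Fin N → ℝ)
    (hcnonneg : ∀ τ j, 0 ≤ c τ j)
    (hcpos : ∀ τ j, τbar ≤ τ → j ∈ Rset → 0 < c τ j)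
    -- observability of (F, col{Hⱼ}_{j ∈ ℛ})
    (hobs : ∀ x : Fin n → ℝ,
      (∀ τ < n, ∀ j ∈ Rset, H j *ᵥ (F ^ τ *ᵥ x) = 0) → x = 0)
    (Γ : Matrix (Fin n) (Fin n) ℝ)
    (hΓ : Γ = ∑ τ ∈ Finset.Icc 2 kbar, β ^ (τ - 1) •
        ∑ j ∈ naiveᶜ, c τ j •
          (((F⁻¹) ^ (τ - 1))ᵀ * ((H j)ᵀ * (R j)⁻¹ * H j) * (F⁻¹) ^ (τ - 1)))
    (P : ℕ → Matrix (Fin n) (Fin n) ℝ)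
    (hPpd : ∀ k, (P k).PosDef)
    (hPbound : ∀ k ≥ kbar, ((P k)⁻¹ - Γ).PosSemidef) :
    Γ.PosDef ∧ ∀ k ≥ kbar, (Γ⁻¹ - P k).PosSemidef :=
  stmt_16_general m F hF H R naive Rset hRnaive hRpd β hβ0 τbar kbar hkbar hτbar c hcnonneg hcpos
    hobs Γ hΓ P hPpd hPbound
end
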